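/- Let C be a category, let n ≥ 2, and let (T_0, η^0, μ^0), …, (T_n, η^n, μ^n) be monads on C equipped, for every pair 0 ≤ i < j ≤ n, with a distributive law λ^{ij} of T_i over T_j, such that for every triple 0 ≤ i < j < k ≤ n the Yang–Baxter equation holds. Then for every 1 ≤ i < n: (a) the iterated Beck composites give monad structures on the endofunctors X ↦ T_i(T_{i-1}(⋯T_0(X)⋯)) and X ↦ T_n(T_{n-1}(⋯T_{i+1}(X)⋯)); (b) the composite of the components of the λ^{jk} (for j ≤ i < k) defines a distributive law of the monad T_i∘T_{i-1}∘⋯∘T_0 over the monad T_n∘T_{n-1}∘⋯∘T_{i+1}; and (c) the monad structure induced on the endofunctor X ↦ T_n(T_{n-1}(⋯T_0(X)⋯)) by any such combination of the structure maps of the monads and the distributive laws is the same, i.e. independent of i. -/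

import Mathlib

open CategoryTheory

universe v u

variable {C : Type u} [Category.{v} C]

/-- The data `ℓ_X : Tf (Sf X) ⟶ Sf (Tf X)` is a distributive law of the monad structure
`(Tf, ηT, μT)` over the monad structure `(Sf, ηS, μS)`: it is natural and it satisfies the
four compatibility axioms with the units and the multiplications. -/
def IsDistribLawData (Tf Sf : C ⥤ C)
    (ηT : ∀ X : C, X ⟶ Tf.obj X) (μT : ∀ X : C, Tf.obj (Tf.obj X) ⟶ Tf.obj X)
    (ηS : ∀ X : C, X ⟶ Sf.obj X) (μS : ∀ X : C, Sf.obj (Sf.obj X) ⟶ Sf.obj X)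
    (ℓ : ∀ X : C, Tf.obj (Sf.obj X) ⟶ Sf.obj (Tf.obj X)) : Prop :=
  (∀ {X Y : C} (f : X ⟶ Y), Tf.map (Sf.map f) ≫ ℓ Y = ℓ X ≫ Sf.map (Tf.map f)) ∧
  (∀ X : C, ηT (Sf.obj X) ≫ ℓ X = Sf.map (ηT X)) ∧
  (∀ X : C, Tf.map (ηS X) ≫ ℓ X = ηS (Tf.obj X)) ∧
  (∀ X : C, μT (Sf.obj X) ≫ ℓ X = Tf.map (ℓ X) ≫ ℓ (Tf.obj X) ≫ Sf.map (μT X)) ∧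
  (∀ X : C, Tf.map (μS X) ≫ ℓ X = ℓ (Sf.obj X) ≫ Sf.map (ℓ X) ≫ μS (Tf.obj X))

/-- `ℓ` is a distributive law of the monad `T` over the monad `S`. -/
def IsMonadDistribLaw (T S : Monad C)
    (ℓ : ∀ X : C, T.obj (S.obj X) ⟶ S.obj (T.obj X)) : Prop :=
  IsDistribLawData T.toFunctor S.toFunctor
    (fun X => T.η.app X) (fun X => T.μ.app X)
    (fun X => S.η.app X) (fun X => S.μ.app X) ℓ

/-- The Yang–Baxter equation for three distributive laws between the monads `T₀`, `T₁`, `T₂`. -/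
def YangBaxter (T0 T1 T2 : Monad C)
    (l01 : ∀ X : C, T0.obj (T1.obj X) ⟶ T1.obj (T0.obj X))
    (l02 : ∀ X : C, T0.obj (T2.obj X) ⟶ T2.obj (T0.obj X))
    (l12 : ∀ X : C, T1.obj (T2.obj X) ⟶ T2.obj (T1.obj X)) : Prop :=
  ∀ X : C, l01 (T2.obj X) ≫ T1.map (l02 X) ≫ l12 (T0.obj X)
    = T0.map (l12 X) ≫ l02 (T1.obj X) ≫ T2.map (l01 X)

/-- The data `(F, η, μ)` satisfies all the axioms of a monad structure on the
endofunctor `F`: `η` and `μ` are natural and the unit and associativity laws hold. -/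
def IsMonadStructure (F : C ⥤ C) (η : ∀ X : C, X ⟶ F.obj X)
    (μ : ∀ X : C, F.obj (F.obj X) ⟶ F.obj X) : Prop :=
  (∀ {X Y : C} (f : X ⟶ Y), f ≫ η Y = η X ≫ F.map f) ∧
  (∀ {X Y : C} (f : X ⟶ Y), F.map (F.map f) ≫ μ Y = μ X ≫ F.map f) ∧
  (∀ X : C, η (F.obj X) ≫ μ X = 𝟙 (F.obj X)) ∧
  (∀ X : C, F.map (η X) ≫ μ X = 𝟙 (F.obj X)) ∧
  (∀ X : C, F.map (μ X) ≫ μ X = μ (F.obj X) ≫ μ X)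

/-- The composite endofunctor `X ↦ Tᵢ(Tᵢ₋₁(⋯ T₀(X) ⋯))`. -/
def lowFun (T : ℕ → Monad C) : ℕ → C ⥤ C
  | 0 => (T 0).toFunctor
  | i + 1 => lowFun T i ⋙ (T (i + 1)).toFunctor

/-- The iterated Beck unit of the composite `Tᵢ ∘ ⋯ ∘ T₀`. -/
def lowUnit (T : ℕ → Monad C) : (i : ℕ) → ∀ X : C, X ⟶ (lowFun T i).obj X
  | 0, X => (T 0).η.app X
  | i + 1, X => (T (i + 1)).η.app X ≫ (T (i + 1)).map (lowUnit T i X)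

/-- The composite distributive law of `Tᵢ ∘ ⋯ ∘ T₀` over `T k`, given by composites of the
laws `λ^{j,k}` for `j ≤ i`. -/
def lowLaw (T : ℕ → Monad C)
    (ℓ : ∀ i j : ℕ, ∀ X : C, (T i).obj ((T j).obj X) ⟶ (T j).obj ((T i).obj X))
    (k : ℕ) : (i : ℕ) → ∀ X : C,
      (lowFun T i).obj ((T k).obj X) ⟶ (T k).obj ((lowFun T i).obj X)
  | 0, X => ℓ 0 k X
  | i + 1, X =>
      (T (i + 1)).map (lowLaw T ℓ k i X) ≫ ℓ (i + 1) k ((lowFun T i).obj X)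

/-- The iterated Beck multiplication of the composite `Tᵢ ∘ ⋯ ∘ T₀`. -/
def lowMul (T : ℕ → Monad C)
    (ℓ : ∀ i j : ℕ, ∀ X : C, (T i).obj ((T j).obj X) ⟶ (T j).obj ((T i).obj X)) :
    (i : ℕ) → ∀ X : C, (lowFun T i).obj ((lowFun T i).obj X) ⟶ (lowFun T i).obj X
  | 0, X => (T 0).μ.app X
  | i + 1, X =>
      (T (i + 1)).map (lowLaw T ℓ (i + 1) i ((lowFun T i).obj X))
        ≫ (T (i + 1)).μ.app ((lowFun T i).obj ((lowFun T i).obj X))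
        ≫ (T (i + 1)).map (lowMul T ℓ i X)

/-- The composite endofunctor `X ↦ T_{a+m}(T_{a+m-1}(⋯ T_a(X) ⋯))`. -/
def upFun (T : ℕ → Monad C) (a : ℕ) : ℕ → C ⥤ C
  | 0 => (T a).toFunctor
  | m + 1 => upFun T a m ⋙ (T (a + m + 1)).toFunctor

/-- The iterated Beck unit of the composite `T_{a+m} ∘ ⋯ ∘ T_a`. -/
def upUnit (T : ℕ → Monad C) (a : ℕ) : (m : ℕ) → ∀ X : C, X ⟶ (upFun T a m).obj X
  | 0, X => (T a).η.app X
  | m + 1, X => (T (a + m + 1)).η.app X ≫ (T (a + m + 1)).map (upUnit T a m X)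

/-- The composite distributive law of `T_{a+m} ∘ ⋯ ∘ T_a` over `T k`. -/
def upLaw (T : ℕ → Monad C)
    (ℓ : ∀ i j : ℕ, ∀ X : C, (T i).obj ((T j).obj X) ⟶ (T j).obj ((T i).obj X))
    (a k : ℕ) : (m : ℕ) → ∀ X : C,
      (upFun T a m).obj ((T k).obj X) ⟶ (T k).obj ((upFun T a m).obj X)
  | 0, X => ℓ a k X
  | m + 1, X =>
      (T (a + m + 1)).map (upLaw T ℓ a k m X) ≫ ℓ (a + m + 1) k ((upFun T a m).obj X)

/-- The iterated Beck multiplication of the composite `T_{a+m} ∘ ⋯ ∘ T_a`. -/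
def upMul (T : ℕ → Monad C)
    (ℓ : ∀ i j : ℕ, ∀ X : C, (T i).obj ((T j).obj X) ⟶ (T j).obj ((T i).obj X))
    (a : ℕ) : (m : ℕ) → ∀ X : C,
      (upFun T a m).obj ((upFun T a m).obj X) ⟶ (upFun T a m).obj X
  | 0, X => (T a).μ.app X
  | m + 1, X =>
      (T (a + m + 1)).map (upLaw T ℓ a (a + m + 1) m ((upFun T a m).obj X))
        ≫ (T (a + m + 1)).μ.app ((upFun T a m).obj ((upFun T a m).obj X))
        ≫ (T (a + m + 1)).map (upMul T ℓ a m X)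

/-- The composite distributive law of a single monad `T j` over `T_{a+m} ∘ ⋯ ∘ T_a`. -/
def overUpLaw (T : ℕ → Monad C)
    (ℓ : ∀ i j : ℕ, ∀ X : C, (T i).obj ((T j).obj X) ⟶ (T j).obj ((T i).obj X))
    (j a : ℕ) : (m : ℕ) → ∀ X : C,
      (T j).obj ((upFun T a m).obj X) ⟶ (upFun T a m).obj ((T j).obj X)
  | 0, X => ℓ j a X
  | m + 1, X =>
      ℓ j (a + m + 1) ((upFun T a m).obj X) ≫ (T (a + m + 1)).map (overUpLaw T ℓ j a m X)

/-- The composite distributive law of `Tᵢ ∘ ⋯ ∘ T₀` over `T_{a+m} ∘ ⋯ ∘ T_a`, given by the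
composites of the laws `λ^{j,k}` with `j ≤ i` and `a ≤ k ≤ a + m`. -/
def lowUpLaw (T : ℕ → Monad C)
    (ℓ : ∀ i j : ℕ, ∀ X : C, (T i).obj ((T j).obj X) ⟶ (T j).obj ((T i).obj X))
    (a m : ℕ) : (i : ℕ) → ∀ X : C,
      (lowFun T i).obj ((upFun T a m).obj X) ⟶ (upFun T a m).obj ((lowFun T i).obj X)
  | 0, X => overUpLaw T ℓ 0 a m X
  | i + 1, X =>
      (T (i + 1)).map (lowUpLaw T ℓ a m i X)
        ≫ overUpLaw T ℓ (i + 1) a m ((lowFun T i).obj X)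

/-!
Beck's construction works for bare endofunctors carrying unit, multiplication and law
data: a distributive law of `A` over `B` makes `B ∘ A` a monad, and when three laws between
`A`, `B`, `K` satisfy the Yang–Baxter equation, the laws with `K` lift to laws between `K`
and `B ∘ A`, and the Yang–Baxter equation itself lifts to composites. Induction along the
series then gives (a) and (b). For (c), the Beck multiplication of `K ∘ (B ∘ A)` agrees with
that of `(K ∘ B) ∘ A` by naturality alone (`beckMul_assoc`); peeling off the top monad of
`T_n ∘ ⋯ ∘ T_{i+1}` one step at a time identifies the structure with the fully iterated one.
-/

section Beck

variable {Af Bf Kf : C ⥤ C}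

def beckUnit (ηA : ∀ X : C, X ⟶ Af.obj X) (ηB : ∀ X : C, X ⟶ Bf.obj X) (X : C) :
    X ⟶ (Af ⋙ Bf).obj X :=
  ηB X ≫ Bf.map (ηA X)

def beckMul (μA : ∀ X : C, Af.obj (Af.obj X) ⟶ Af.obj X)
    (μB : ∀ X : C, Bf.obj (Bf.obj X) ⟶ Bf.obj X)
    (lab : ∀ X : C, Af.obj (Bf.obj X) ⟶ Bf.obj (Af.obj X)) (X : C) :
    (Af ⋙ Bf).obj ((Af ⋙ Bf).obj X) ⟶ (Af ⋙ Bf).obj X :=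
  Bf.map (lab (Af.obj X)) ≫ μB (Af.obj (Af.obj X)) ≫ Bf.map (μA X)

def compLaw (lak : ∀ X : C, Af.obj (Kf.obj X) ⟶ Kf.obj (Af.obj X))
    (lbk : ∀ X : C, Bf.obj (Kf.obj X) ⟶ Kf.obj (Bf.obj X)) (X : C) :
    (Af ⋙ Bf).obj (Kf.obj X) ⟶ Kf.obj ((Af ⋙ Bf).obj X) :=
  Bf.map (lak X) ≫ lbk (Af.obj X)

def overCompLaw (lka : ∀ X : C, Kf.obj (Af.obj X) ⟶ Af.obj (Kf.obj X))
    (lkb : ∀ X : C, Kf.obj (Bf.obj X) ⟶ Bf.obj (Kf.obj X)) (X : C) :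
    Kf.obj ((Af ⋙ Bf).obj X) ⟶ (Af ⋙ Bf).obj (Kf.obj X) :=
  lkb (Af.obj X) ≫ Bf.map (lka X)

def YangBaxterData (lab : ∀ X : C, Af.obj (Bf.obj X) ⟶ Bf.obj (Af.obj X))
    (lak : ∀ X : C, Af.obj (Kf.obj X) ⟶ Kf.obj (Af.obj X))
    (lbk : ∀ X : C, Bf.obj (Kf.obj X) ⟶ Kf.obj (Bf.obj X)) : Prop :=
  ∀ X : C, lab (Kf.obj X) ≫ Bf.map (lak X) ≫ lbk (Af.obj X)
    = Af.map (lbk X) ≫ lak (Bf.obj X) ≫ Kf.map (lab X)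

variable {ηA : ∀ X : C, X ⟶ Af.obj X} {μA : ∀ X : C, Af.obj (Af.obj X) ⟶ Af.obj X}
  {ηB : ∀ X : C, X ⟶ Bf.obj X} {μB : ∀ X : C, Bf.obj (Bf.obj X) ⟶ Bf.obj X}
  {ηK : ∀ X : C, X ⟶ Kf.obj X} {μK : ∀ X : C, Kf.obj (Kf.obj X) ⟶ Kf.obj X}

theorem isMonadStructure_beck {lab : ∀ X : C, Af.obj (Bf.obj X) ⟶ Bf.obj (Af.obj X)}
    (hA : IsMonadStructure Af ηA μA) (hB : IsMonadStructure Bf ηB μB)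
    (hab : IsDistribLawData Af Bf ηA μA ηB μB lab) :
    IsMonadStructure (Af ⋙ Bf) (beckUnit ηA ηB) (beckMul μA μB lab) := by
  obtain ⟨hAη, hAμ, hAlu, hAru, hAas⟩ := hA
  obtain ⟨hBη, hBμ, hBlu, hBru, hBas⟩ := hB
  obtain ⟨lnat, l1, l2, l3, l4⟩ := hab
  refine ⟨fun f => ?_, fun {_ Y} f => ?_, fun X => ?_, fun X => ?_, fun X => ?_⟩
  all_goals simp only [beckUnit, beckMul, Functor.comp_obj, Functor.comp_map, Category.assoc]
  · rw [reassoc_of% (hBη f), ← Functor.map_comp, hAη f, Functor.map_comp]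
  · rw [← Functor.map_comp_assoc Bf _ (lab (Af.obj Y)), lnat (Af.map f),
      Functor.map_comp_assoc, reassoc_of% (hBμ (Af.map (Af.map f))), ← Functor.map_comp, hAμ f,
      Functor.map_comp]
  · rw [← Functor.map_comp_assoc, l1, reassoc_of% (hBμ (ηA (Af.obj X))),
      reassoc_of% (hBlu (Af.obj X)), ← Functor.map_comp, hAlu, CategoryTheory.Functor.map_id]
  · simp only [Functor.map_comp, Category.assoc]
    rw [← Functor.map_comp_assoc Bf (Af.map (Bf.map (ηA X))) (lab (Af.obj X)), lnat (ηA X),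
      Functor.map_comp_assoc, ← Functor.map_comp_assoc Bf (Af.map (ηB X)), l2,
      reassoc_of% (hBμ (Af.map (ηA X))), reassoc_of% (hBru (Af.obj X)),
      ← Functor.map_comp, hAru, CategoryTheory.Functor.map_id]
  · simp only [Functor.map_comp, Category.assoc]
    rw [← Functor.map_comp_assoc Bf (Af.map (Bf.map (μA X))) (lab (Af.obj X)), lnat (μA X),
      Functor.map_comp_assoc,
      ← Functor.map_comp_assoc Bf (Af.map (μB (Af.obj (Af.obj X)))) (lab (Af.obj (Af.obj X))),
      l4 (Af.obj (Af.obj X))]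
    simp only [Functor.map_comp, Category.assoc]
    rw [← Functor.map_comp_assoc Bf (μB (Af.obj (Af.obj (Af.obj X)))) (Bf.map (Af.map (μA X))),
      ← hBμ (Af.map (μA X)), Functor.map_comp_assoc,
      reassoc_of% (hBas (Af.obj (Af.obj X))),
      reassoc_of% (hBμ (Bf.map (Af.map (μA X)))),
      reassoc_of% (hBμ (lab (Af.obj (Af.obj X)))),
      ← Functor.map_comp_assoc Bf (Af.map (Bf.map (lab (Af.obj X))))
        (lab (Bf.obj (Af.obj (Af.obj X)))), lnat (lab (Af.obj X)), Functor.map_comp_assoc,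
      reassoc_of% (hBμ (Af.map (lab (Af.obj X)))),
      reassoc_of% (hBμ (Af.map (μA X))),
      ← Functor.map_comp Bf (Af.map (μA X)) (μA X), hAas X, Functor.map_comp,
      ← Functor.map_comp_assoc Bf (μA (Bf.obj (Af.obj X))) (lab (Af.obj X)), l3 (Af.obj X)]
    simp only [Functor.map_comp, Category.assoc]
    rw [reassoc_of% (hBμ (μA (Af.obj X)))]

theorem isDistribLawData_compLaw {lab : ∀ X : C, Af.obj (Bf.obj X) ⟶ Bf.obj (Af.obj X)}
    {lak : ∀ X : C, Af.obj (Kf.obj X) ⟶ Kf.obj (Af.obj X)}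
    {lbk : ∀ X : C, Bf.obj (Kf.obj X) ⟶ Kf.obj (Bf.obj X)}
    (hB : IsMonadStructure Bf ηB μB)
    (hab : IsDistribLawData Af Bf ηA μA ηB μB lab)
    (hak : IsDistribLawData Af Kf ηA μA ηK μK lak)
    (hbk : IsDistribLawData Bf Kf ηB μB ηK μK lbk)
    (hyb : YangBaxterData lab lak lbk) :
    IsDistribLawData (Af ⋙ Bf) Kf (beckUnit ηA ηB) (beckMul μA μB lab) ηK μK
      (compLaw lak lbk) := by
  obtain ⟨-, hBμ, -, -, -⟩ := hB
  obtain ⟨abnat, -, -, -, -⟩ := hab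
  obtain ⟨aknat, ak1, ak2, ak4, ak5⟩ := hak
  obtain ⟨bknat, bk1, bk2, bk4, bk5⟩ := hbk
  refine ⟨fun {_ Y} f => ?_, fun X => ?_, fun X => ?_, fun X => ?_, fun X => ?_⟩
  all_goals simp only [beckUnit, beckMul, compLaw, Functor.comp_obj, Functor.comp_map,
    Functor.map_comp, Category.assoc]
  · rw [← Functor.map_comp_assoc Bf (Af.map (Kf.map f)) (lak Y), aknat f,
      Functor.map_comp_assoc, bknat (Af.map f)]
  · rw [← Functor.map_comp_assoc Bf (ηA (Kf.obj X)) (lak X), ak1,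
      bknat (ηA X), reassoc_of% (bk1 X), ← Functor.map_comp]
  · rw [← Functor.map_comp_assoc Bf (Af.map (ηK X)) (lak X), ak2, bk2]
  · rw [← Functor.map_comp_assoc Bf (μA (Kf.obj X)) (lak X), ak4 X]
    simp only [Functor.map_comp, Category.assoc]
    rw [bknat (μA X), ← reassoc_of% (hBμ (Af.map (lak X))),
      ← reassoc_of% (hBμ (lak (Af.obj X))),
      reassoc_of% (bk4 (Af.obj (Af.obj X))),
      ← Functor.map_comp_assoc Bf (Bf.map (lak (Af.obj X))) (lbk (Af.obj (Af.obj X))),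
      ← Functor.map_comp_assoc Bf (Bf.map (Af.map (lak X))),
      ← Functor.map_comp_assoc Bf (lab (Af.obj (Kf.obj X))),
      ← reassoc_of% (abnat (lak X)), hyb (Af.obj X)]
    simp only [Functor.map_comp, Category.assoc]
    rw [reassoc_of% (bknat (lab (Af.obj X)))]
  · rw [← Functor.map_comp_assoc Bf (Af.map (μK X)) (lak X), ak5 X]
    simp only [Functor.map_comp, Category.assoc]
    rw [bk5 (Af.obj X), reassoc_of% (bknat (lak X))]

theorem isDistribLawData_overCompLaw {lka : ∀ X : C, Kf.obj (Af.obj X) ⟶ Af.obj (Kf.obj X)}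
    {lkb : ∀ X : C, Kf.obj (Bf.obj X) ⟶ Bf.obj (Kf.obj X)}
    {lab : ∀ X : C, Af.obj (Bf.obj X) ⟶ Bf.obj (Af.obj X)}
    (hB : IsMonadStructure Bf ηB μB)
    (hka : IsDistribLawData Kf Af ηK μK ηA μA lka)
    (hkb : IsDistribLawData Kf Bf ηK μK ηB μB lkb)
    (hab : IsDistribLawData Af Bf ηA μA ηB μB lab)
    (hyb : YangBaxterData lka lkb lab) :
    IsDistribLawData Kf (Af ⋙ Bf) ηK μK (beckUnit ηA ηB) (beckMul μA μB lab)
      (overCompLaw lka lkb) := by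
  obtain ⟨-, hBμ, -, -, -⟩ := hB
  obtain ⟨abnat, -, -, -, -⟩ := hab
  obtain ⟨kanat, ka1, ka2, ka4, ka5⟩ := hka
  obtain ⟨kbnat, kb1, kb2, kb4, kb5⟩ := hkb
  refine ⟨fun f => ?_, fun X => ?_, fun X => ?_, fun X => ?_, fun X => ?_⟩
  all_goals simp only [beckUnit, beckMul, overCompLaw, Functor.comp_obj, Functor.comp_map,
    Functor.map_comp, Category.assoc]
  · rw [reassoc_of% (kbnat (Af.map f)), ← Functor.map_comp, kanat f, Functor.map_comp]
  · rw [reassoc_of% (kb1 (Af.obj X)), ← Functor.map_comp, ka1]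
  · rw [reassoc_of% (kbnat (ηA X)), reassoc_of% (kb2 X), ← Functor.map_comp, ka2]
  · rw [reassoc_of% (kb4 (Af.obj X)), ← Functor.map_comp Bf (μK (Af.obj X)) (lka X), ka4 X]
    simp only [Functor.map_comp]
    rw [← reassoc_of% (kbnat (lka X))]
  · rw [reassoc_of% (kbnat (μA X)), ← Functor.map_comp Bf (Kf.map (μA X)) (lka X), ka5 X]
    simp only [Functor.map_comp]
    rw [reassoc_of% (kb5 (Af.obj (Af.obj X))), ← reassoc_of% (hBμ (lka (Af.obj X))),
      ← reassoc_of% (hBμ (Af.map (lka X))), reassoc_of% (kbnat (lab (Af.obj X))),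
      ← Functor.map_comp_assoc Bf (Bf.map (lka (Af.obj X))) (Bf.map (Af.map (lka X))),
      ← Functor.map_comp_assoc Bf (lkb (Af.obj (Af.obj X))),
      ← Functor.map_comp_assoc Bf (Kf.map (lab (Af.obj X))),
      ← reassoc_of% (hyb (Af.obj X)), ← abnat (lka X)]
    simp only [Functor.map_comp, Category.assoc]

theorem yangBaxterData_comp_fst {A₀ A₁ : C ⥤ C}
    {l₀b : ∀ X : C, A₀.obj (Bf.obj X) ⟶ Bf.obj (A₀.obj X)}
    {l₁b : ∀ X : C, A₁.obj (Bf.obj X) ⟶ Bf.obj (A₁.obj X)}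
    {l₀k : ∀ X : C, A₀.obj (Kf.obj X) ⟶ Kf.obj (A₀.obj X)}
    {l₁k : ∀ X : C, A₁.obj (Kf.obj X) ⟶ Kf.obj (A₁.obj X)}
    {lbk : ∀ X : C, Bf.obj (Kf.obj X) ⟶ Kf.obj (Bf.obj X)}
    (n₁b : ∀ {X Y : C} (f : X ⟶ Y),
      A₁.map (Bf.map f) ≫ l₁b Y = l₁b X ≫ Bf.map (A₁.map f))
    (n₁k : ∀ {X Y : C} (f : X ⟶ Y),
      A₁.map (Kf.map f) ≫ l₁k Y = l₁k X ≫ Kf.map (A₁.map f))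
    (yb₀ : YangBaxterData l₀b l₀k lbk) (yb₁ : YangBaxterData l₁b l₁k lbk) :
    YangBaxterData (compLaw l₀b l₁b) (compLaw l₀k l₁k) lbk := by
  intro X
  simp only [compLaw, Functor.comp_obj, Functor.comp_map, Functor.map_comp, Category.assoc]
  rw [← reassoc_of% (n₁b (l₀k X)), yb₁ (A₀.obj X),
    ← Functor.map_comp_assoc A₁ (Bf.map (l₀k X)) (lbk (A₀.obj X)),
    ← Functor.map_comp_assoc A₁ (l₀b (Kf.obj X)), yb₀ X]
  simp only [Functor.map_comp, Category.assoc]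
  rw [reassoc_of% (n₁k (l₀b X))]

theorem yangBaxterData_comp_snd {B₀ B₁ : C ⥤ C}
    {lab₀ : ∀ X : C, Af.obj (B₀.obj X) ⟶ B₀.obj (Af.obj X)}
    {lab₁ : ∀ X : C, Af.obj (B₁.obj X) ⟶ B₁.obj (Af.obj X)}
    {lak : ∀ X : C, Af.obj (Kf.obj X) ⟶ Kf.obj (Af.obj X)}
    {lb₀k : ∀ X : C, B₀.obj (Kf.obj X) ⟶ Kf.obj (B₀.obj X)}
    {lb₁k : ∀ X : C, B₁.obj (Kf.obj X) ⟶ Kf.obj (B₁.obj X)}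
    (nab₁ : ∀ {X Y : C} (f : X ⟶ Y),
      Af.map (B₁.map f) ≫ lab₁ Y = lab₁ X ≫ B₁.map (Af.map f))
    (nb₁k : ∀ {X Y : C} (f : X ⟶ Y),
      B₁.map (Kf.map f) ≫ lb₁k Y = lb₁k X ≫ Kf.map (B₁.map f))
    (yb₀ : YangBaxterData lab₀ lak lb₀k) (yb₁ : YangBaxterData lab₁ lak lb₁k) :
    YangBaxterData (overCompLaw lab₀ lab₁) lak (compLaw lb₀k lb₁k) := by
  intro X
  simp only [compLaw, overCompLaw, Functor.comp_obj, Functor.comp_map, Functor.map_comp,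
    Category.assoc]
  rw [← Functor.map_comp_assoc B₁ (lab₀ (Kf.obj X)) (B₀.map (lak X)),
    ← Functor.map_comp_assoc B₁ _ (lb₀k (Af.obj X)), Category.assoc, yb₀ X]
  simp only [Functor.map_comp, Category.assoc]
  rw [← reassoc_of% (nab₁ (lb₀k X)), nb₁k (lab₀ X), reassoc_of% (yb₁ (B₀.obj X))]

theorem yangBaxterData_comp_thd {K₀ K₁ : C ⥤ C}
    {lab : ∀ X : C, Af.obj (Bf.obj X) ⟶ Bf.obj (Af.obj X)}
    {lak₀ : ∀ X : C, Af.obj (K₀.obj X) ⟶ K₀.obj (Af.obj X)}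
    {lak₁ : ∀ X : C, Af.obj (K₁.obj X) ⟶ K₁.obj (Af.obj X)}
    {lbk₀ : ∀ X : C, Bf.obj (K₀.obj X) ⟶ K₀.obj (Bf.obj X)}
    {lbk₁ : ∀ X : C, Bf.obj (K₁.obj X) ⟶ K₁.obj (Bf.obj X)}
    (nak₁ : ∀ {X Y : C} (f : X ⟶ Y),
      Af.map (K₁.map f) ≫ lak₁ Y = lak₁ X ≫ K₁.map (Af.map f))
    (nbk₁ : ∀ {X Y : C} (f : X ⟶ Y),
      Bf.map (K₁.map f) ≫ lbk₁ Y = lbk₁ X ≫ K₁.map (Bf.map f))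
    (yb₀ : YangBaxterData lab lak₀ lbk₀) (yb₁ : YangBaxterData lab lak₁ lbk₁) :
    YangBaxterData lab (overCompLaw lak₀ lak₁) (overCompLaw lbk₀ lbk₁) := by
  intro X
  simp only [overCompLaw, Functor.comp_obj, Functor.comp_map, Functor.map_comp, Category.assoc]
  rw [reassoc_of% (nbk₁ (lak₀ X)), reassoc_of% (yb₁ (K₀.obj X)),
    ← Functor.map_comp K₁ (Bf.map (lak₀ X)) (lbk₀ (Af.obj X)),
    ← Functor.map_comp K₁ (lab (K₀.obj X)), yb₀ X]
  simp only [Functor.map_comp]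
  rw [← reassoc_of% (nak₁ (lbk₀ X))]

theorem beckUnit_assoc (ηA : ∀ X : C, X ⟶ Af.obj X) (ηB : ∀ X : C, X ⟶ Bf.obj X)
    (ηK : ∀ X : C, X ⟶ Kf.obj X) :
    beckUnit (Bf := Bf ⋙ Kf) ηA (beckUnit ηB ηK) = beckUnit (beckUnit ηA ηB) ηK := by
  funext X
  simp [beckUnit]

theorem compLaw_assoc {Jf : C ⥤ C} (laj : ∀ X : C, Af.obj (Jf.obj X) ⟶ Jf.obj (Af.obj X))
    (lbj : ∀ X : C, Bf.obj (Jf.obj X) ⟶ Jf.obj (Bf.obj X))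
    (lkj : ∀ X : C, Kf.obj (Jf.obj X) ⟶ Jf.obj (Kf.obj X)) :
    compLaw (Bf := Bf ⋙ Kf) laj (compLaw lbj lkj) = compLaw (compLaw laj lbj) lkj := by
  funext X
  simp [compLaw]

theorem beckMul_assoc (μA : ∀ X : C, Af.obj (Af.obj X) ⟶ Af.obj X)
    (μB : ∀ X : C, Bf.obj (Bf.obj X) ⟶ Bf.obj X)
    {lab : ∀ X : C, Af.obj (Bf.obj X) ⟶ Bf.obj (Af.obj X)}
    {lak : ∀ X : C, Af.obj (Kf.obj X) ⟶ Kf.obj (Af.obj X)}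
    {lbk : ∀ X : C, Bf.obj (Kf.obj X) ⟶ Kf.obj (Bf.obj X)}
    (nbk : ∀ {X Y : C} (f : X ⟶ Y), Bf.map (Kf.map f) ≫ lbk Y = lbk X ≫ Kf.map (Bf.map f))
    (nμK : ∀ {X Y : C} (f : X ⟶ Y), Kf.map (Kf.map f) ≫ μK Y = μK X ≫ Kf.map f) :
    beckMul (Bf := Bf ⋙ Kf) μA (beckMul μB μK lbk) (overCompLaw lab lak)
      = beckMul (beckMul μA μB lab) μK (compLaw lak lbk) := by
  funext X
  simp only [beckMul, compLaw, overCompLaw, Functor.comp_obj, Functor.comp_map,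
    Functor.map_comp, Category.assoc]
  rw [← reassoc_of% (nμK (Bf.map (lab (Af.obj X)))),
    ← Functor.map_comp_assoc Kf (lbk (Af.obj (Bf.obj (Af.obj X)))), ← nbk (lab (Af.obj X)),
    Functor.map_comp_assoc]

end Beck

-- `lowFun T i ⋙ upFun T (i + 1) m` and `lowFun T (i + 1 + m)` are equal only propositionally,
-- so the monad data living on them is compared after transport along that equality.
section Transport

variable {F G K : C ⥤ C}

def transportUnit (h : F = G) (η : ∀ X : C, X ⟶ F.obj X) (X : C) : X ⟶ G.obj X :=
  η X ≫ eqToHom (Functor.congr_obj h X)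

def transportMul (h : F = G) (μ : ∀ X : C, F.obj (F.obj X) ⟶ F.obj X) (X : C) :
    G.obj (G.obj X) ⟶ G.obj X :=
  eqToHom ((Functor.congr_obj h (F.obj X)).trans (congrArg G.obj (Functor.congr_obj h X))).symm
    ≫ μ X ≫ eqToHom (Functor.congr_obj h X)

def transportLaw (h : F = G) (l : ∀ X : C, F.obj (K.obj X) ⟶ K.obj (F.obj X)) (X : C) :
    G.obj (K.obj X) ⟶ K.obj (G.obj X) :=
  eqToHom (Functor.congr_obj h (K.obj X)).symm ≫ l X
    ≫ eqToHom (congrArg K.obj (Functor.congr_obj h X))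

theorem transportUnit_beckUnit (h : F = G) {ηF : ∀ X : C, X ⟶ F.obj X}
    {ηG : ∀ X : C, X ⟶ G.obj X} (ηK : ∀ X : C, X ⟶ K.obj X)
    (hη : transportUnit h ηF = ηG) :
    transportUnit (congrArg (· ⋙ K) h) (beckUnit ηF ηK) = beckUnit ηG ηK := by
  subst h hη
  funext X
  simp [transportUnit, beckUnit]

theorem transportMul_beckMul (h : F = G) {μF : ∀ X : C, F.obj (F.obj X) ⟶ F.obj X}
    {μG : ∀ X : C, G.obj (G.obj X) ⟶ G.obj X} (μK : ∀ X : C, K.obj (K.obj X) ⟶ K.obj X)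
    {lF : ∀ X : C, F.obj (K.obj X) ⟶ K.obj (F.obj X)}
    {lG : ∀ X : C, G.obj (K.obj X) ⟶ K.obj (G.obj X)}
    (hμ : transportMul h μF = μG) (hl : transportLaw h lF = lG) :
    transportMul (congrArg (· ⋙ K) h) (beckMul μF μK lF) = beckMul μG μK lG := by
  subst h hμ hl
  funext X
  simp [transportMul, transportLaw, beckMul]

theorem transportLaw_compLaw {J : C ⥤ C} (h : F = G)
    {lF : ∀ X : C, F.obj (K.obj X) ⟶ K.obj (F.obj X)}
    {lG : ∀ X : C, G.obj (K.obj X) ⟶ K.obj (G.obj X)}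
    (ljk : ∀ X : C, J.obj (K.obj X) ⟶ K.obj (J.obj X)) (hl : transportLaw h lF = lG) :
    transportLaw (congrArg (· ⋙ J) h) (compLaw lF ljk) = compLaw lG ljk := by
  subst h hl
  funext X
  simp [transportLaw, compLaw]

end Transport

theorem CategoryTheory.Monad.isMonadStructure (M : Monad C) :
    IsMonadStructure M.toFunctor (fun X => M.η.app X) (fun X => M.μ.app X) :=
  ⟨fun f => by simpa using M.η.naturality f, fun f => by simpa using M.μ.naturality f,
    fun X => M.left_unit X, fun X => M.right_unit X, fun X => M.assoc X⟩

section Series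

variable {n : ℕ} {T : ℕ → Monad C}
  {ℓ : ∀ i j : ℕ, ∀ X : C, (T i).obj ((T j).obj X) ⟶ (T j).obj ((T i).obj X)}
  (hlaw : ∀ i j : ℕ, i < j → j ≤ n → IsMonadDistribLaw (T i) (T j) (ℓ i j))
  (hYB : ∀ i j k : ℕ, i < j → j < k → k ≤ n →
    YangBaxter (T i) (T j) (T k) (ℓ i j) (ℓ i k) (ℓ j k))
include hlaw hYB

theorem yangBaxterData_upFun_fst {a j k : ℕ} (m : ℕ) (hj : a + m < j) (hjk : j < k)
    (hk : k ≤ n) : YangBaxterData (upLaw T ℓ a j m) (upLaw T ℓ a k m) (ℓ j k) := by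
  induction m with
  | zero => exact hYB a j k hj hjk hk
  | succ m ih =>
    exact yangBaxterData_comp_fst (hlaw _ j hj (by omega)).1 (hlaw _ k (by omega) hk).1
      (ih (by omega)) (hYB _ j k hj hjk hk)

theorem isDistribLawData_upLaw {a k : ℕ} (m : ℕ) (hk : a + m < k) (hkn : k ≤ n) :
    IsDistribLawData (upFun T a m) (T k).toFunctor (upUnit T a m) (upMul T ℓ a m)
      (fun X => (T k).η.app X) (fun X => (T k).μ.app X) (upLaw T ℓ a k m) := by
  induction m generalizing k with
  | zero => exact hlaw a k hk hkn
  | succ m ih =>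
    exact isDistribLawData_compLaw (T _).isMonadStructure (ih (by omega) (by omega))
      (ih (by omega) hkn) (hlaw _ k hk hkn)
      (yangBaxterData_upFun_fst hlaw hYB m (by omega) hk hkn)

theorem isMonadStructure_upFun {a : ℕ} (m : ℕ) (h : a + m ≤ n) :
    IsMonadStructure (upFun T a m) (upUnit T a m) (upMul T ℓ a m) := by
  induction m with
  | zero => exact (T a).isMonadStructure
  | succ m ih =>
    exact isMonadStructure_beck (ih (by omega)) (T _).isMonadStructure
      (isDistribLawData_upLaw hlaw hYB m (by omega) h)

theorem yangBaxterData_upFun_snd {j a k : ℕ} (m : ℕ) (hj : j < a) (hk : a + m < k)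
    (hkn : k ≤ n) : YangBaxterData (overUpLaw T ℓ j a m) (ℓ j k) (upLaw T ℓ a k m) := by
  induction m with
  | zero => exact hYB j a k hj hk hkn
  | succ m ih =>
    exact yangBaxterData_comp_snd (hlaw j _ (by omega) (by omega)).1
      (hlaw _ k hk hkn).1 (ih (by omega)) (hYB j _ k (by omega) hk hkn)

theorem isDistribLawData_overUpLaw {j a : ℕ} (m : ℕ) (hj : j < a) (h : a + m ≤ n) :
    IsDistribLawData (T j).toFunctor (upFun T a m)
      (fun X => (T j).η.app X) (fun X => (T j).μ.app X)
      (upUnit T a m) (upMul T ℓ a m) (overUpLaw T ℓ j a m) := by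
  induction m with
  | zero => exact hlaw j a hj h
  | succ m ih =>
    exact isDistribLawData_overCompLaw (T _).isMonadStructure (ih (by omega))
      (hlaw j _ (by omega) h) (isDistribLawData_upLaw hlaw hYB m (by omega) h)
      (yangBaxterData_upFun_snd hlaw hYB m hj (by omega) h)

theorem yangBaxterData_upFun_thd {i b a : ℕ} (m : ℕ) (hi : i < b) (hb : b < a)
    (h : a + m ≤ n) :
    YangBaxterData (ℓ i b) (overUpLaw T ℓ i a m) (overUpLaw T ℓ b a m) := by
  induction m with
  | zero => exact hYB i b a hi hb h
  | succ m ih =>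
    exact yangBaxterData_comp_thd (hlaw i _ (by omega) h).1 (hlaw b _ (by omega) h).1
      (ih (by omega)) (hYB i b _ hi (by omega) h)

theorem yangBaxterData_lowFun_fst {j k : ℕ} (i : ℕ) (hi : i < j) (hjk : j < k) (hk : k ≤ n) :
    YangBaxterData (lowLaw T ℓ j i) (lowLaw T ℓ k i) (ℓ j k) := by
  induction i with
  | zero => exact hYB 0 j k hi hjk hk
  | succ i ih =>
    exact yangBaxterData_comp_fst (hlaw _ j hi (by omega)).1 (hlaw _ k (by omega) hk).1
      (ih (by omega)) (hYB _ j k hi hjk hk)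

theorem isDistribLawData_lowLaw {k : ℕ} (i : ℕ) (hk : i < k) (hkn : k ≤ n) :
    IsDistribLawData (lowFun T i) (T k).toFunctor (lowUnit T i) (lowMul T ℓ i)
      (fun X => (T k).η.app X) (fun X => (T k).μ.app X) (lowLaw T ℓ k i) := by
  induction i generalizing k with
  | zero => exact hlaw 0 k hk hkn
  | succ i ih =>
    exact isDistribLawData_compLaw (T _).isMonadStructure (ih (by omega) (by omega))
      (ih (by omega) hkn) (hlaw _ k hk hkn)
      (yangBaxterData_lowFun_fst hlaw hYB i (by omega) hk hkn)

theorem isMonadStructure_lowFun (i : ℕ) (h : i ≤ n) :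
    IsMonadStructure (lowFun T i) (lowUnit T i) (lowMul T ℓ i) := by
  induction i with
  | zero => exact (T 0).isMonadStructure
  | succ i ih =>
    exact isMonadStructure_beck (ih (by omega)) (T _).isMonadStructure
      (isDistribLawData_lowLaw hlaw hYB i (by omega) h)

theorem yangBaxterData_lowFun_upFun {b a : ℕ} (i m : ℕ) (hi : i < b) (hb : b < a)
    (h : a + m ≤ n) :
    YangBaxterData (lowLaw T ℓ b i) (lowUpLaw T ℓ a m i) (overUpLaw T ℓ b a m) := by
  induction i with
  | zero => exact yangBaxterData_upFun_thd hlaw hYB m hi hb h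
  | succ i ih =>
    exact yangBaxterData_comp_fst (hlaw _ b hi (by omega)).1
      (isDistribLawData_overUpLaw hlaw hYB m (by omega) h).1 (ih (by omega))
      (yangBaxterData_upFun_thd hlaw hYB m hi hb h)

theorem isDistribLawData_lowUpLaw {a : ℕ} (i m : ℕ) (ha : i < a) (h : a + m ≤ n) :
    IsDistribLawData (lowFun T i) (upFun T a m) (lowUnit T i) (lowMul T ℓ i)
      (upUnit T a m) (upMul T ℓ a m) (lowUpLaw T ℓ a m i) := by
  induction i with
  | zero => exact isDistribLawData_overUpLaw hlaw hYB m ha h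
  | succ i ih =>
    exact isDistribLawData_compLaw (T _).isMonadStructure
      (isDistribLawData_lowLaw hlaw hYB i (by omega) (by omega)) (ih (by omega))
      (isDistribLawData_overUpLaw hlaw hYB m ha h)
      (yangBaxterData_lowFun_upFun hlaw hYB i m (by omega) ha h)

end Series

section Identification

variable (T : ℕ → Monad C)
  (ℓ : ∀ i j : ℕ, ∀ X : C, (T i).obj ((T j).obj X) ⟶ (T j).obj ((T i).obj X))

theorem lowFun_comp_upFun (i : ℕ) : ∀ m, lowFun T i ⋙ upFun T (i + 1) m = lowFun T (i + 1 + m)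
  | 0 => rfl
  | m + 1 => congrArg (· ⋙ (T (i + 1 + m + 1)).toFunctor) (lowFun_comp_upFun i m)

theorem transportUnit_lowUnit (i m : ℕ) :
    transportUnit (lowFun_comp_upFun T i m) (beckUnit (lowUnit T i) (upUnit T (i + 1) m))
      = lowUnit T (i + 1 + m) := by
  induction m with
  | zero => exact funext fun X => Category.comp_id _
  | succ m ih =>
    have step := transportUnit_beckUnit _ (fun X => (T (i + 1 + m + 1)).η.app X) ih
    rwa [← beckUnit_assoc] at step

theorem transportLaw_lowLaw (i m k : ℕ) :
    transportLaw (lowFun_comp_upFun T i m) (compLaw (lowLaw T ℓ k i) (upLaw T ℓ (i + 1) k m))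
      = lowLaw T ℓ k (i + 1 + m) := by
  induction m with
  | zero => exact funext fun X => (Category.id_comp _).trans (Category.comp_id _)
  | succ m ih =>
    have step := transportLaw_compLaw _ (ℓ (i + 1 + m + 1) k) ih
    rwa [← compLaw_assoc] at step

theorem lowUpLaw_zero (a : ℕ) : ∀ i, lowUpLaw T ℓ a 0 i = lowLaw T ℓ a i
  | 0 => rfl
  | i + 1 => by
    funext X
    change (T (i + 1)).map (lowUpLaw T ℓ a 0 i X) ≫ _ = _
    rw [lowUpLaw_zero a i]
    rfl

variable {T ℓ} {n : ℕ}
  (hlaw : ∀ i j : ℕ, i < j → j ≤ n → IsMonadDistribLaw (T i) (T j) (ℓ i j))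
include hlaw

theorem lowUpLaw_succ {a : ℕ} (i m : ℕ) (ha : i < a) (h : a + m + 1 ≤ n) :
    lowUpLaw T ℓ a (m + 1) i
      = overCompLaw (lowUpLaw T ℓ a m i) (lowLaw T ℓ (a + m + 1) i) := by
  funext X
  induction i with
  | zero => rfl
  | succ i ih =>
    have nat := (hlaw (i + 1) (a + m + 1) (by omega) h).1 (lowUpLaw T ℓ a m i X)
    -- Unfolding `lowFun` and `upFun` in the hom-types too lets `Functor.map_comp` match
    -- after the rewrite with `ih`.
    dsimp only [lowUpLaw, lowLaw, overUpLaw, overCompLaw, lowFun, upFun, Functor.comp_obj]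
    rw [ih (by omega)]
    simp only [overCompLaw, Functor.map_comp, Category.assoc]
    rw [reassoc_of% nat]

theorem transportMul_lowMul
    (hYB : ∀ i j k : ℕ, i < j → j < k → k ≤ n →
      YangBaxter (T i) (T j) (T k) (ℓ i j) (ℓ i k) (ℓ j k))
    (i m : ℕ) (h : i + 1 + m ≤ n) :
    transportMul (lowFun_comp_upFun T i m)
        (beckMul (lowMul T ℓ i) (upMul T ℓ (i + 1) m) (lowUpLaw T ℓ (i + 1) m i))
      = lowMul T ℓ (i + 1 + m) := by
  induction m with
  | zero =>
    rw [lowUpLaw_zero]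
    exact funext fun X => (Category.id_comp _).trans (Category.comp_id _)
  | succ m ih =>
    have step := transportMul_beckMul _ (fun X => (T (i + 1 + m + 1)).μ.app X)
      (ih (by omega)) (transportLaw_lowLaw T ℓ i m _)
    rw [← beckMul_assoc _ _
      (isDistribLawData_upLaw (a := i + 1) (k := i + 1 + m + 1) hlaw hYB m (by omega) h).1
      (T _).isMonadStructure.2.1] at step
    rwa [lowUpLaw_succ hlaw i m (by omega) h]

end Identification

theorem cheng_distributive_series_general (n : ℕ) (T : ℕ → Monad C)
    (ℓ : ∀ i j : ℕ, ∀ X : C, (T i).obj ((T j).obj X) ⟶ (T j).obj ((T i).obj X))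
    (hlaw : ∀ i j : ℕ, i < j → j ≤ n → IsMonadDistribLaw (T i) (T j) (ℓ i j))
    (hYB : ∀ i j k : ℕ, i < j → j < k → k ≤ n →
      YangBaxter (T i) (T j) (T k) (ℓ i j) (ℓ i k) (ℓ j k)) :
    ∀ i : ℕ, 1 ≤ i → i < n →
      -- (a) both iterated Beck composites are monads
      IsMonadStructure (lowFun T i) (lowUnit T i) (lowMul T ℓ i) ∧
      IsMonadStructure (upFun T (i + 1) (n - i - 1)) (upUnit T (i + 1) (n - i - 1))
        (upMul T ℓ (i + 1) (n - i - 1)) ∧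
      -- (b) the composite of the `λ^{j,k}` is a distributive law of
      -- `Tᵢ ∘ ⋯ ∘ T₀` over `T_n ∘ ⋯ ∘ T_{i+1}`
      IsDistribLawData (lowFun T i) (upFun T (i + 1) (n - i - 1))
        (lowUnit T i) (lowMul T ℓ i)
        (upUnit T (i + 1) (n - i - 1)) (upMul T ℓ (i + 1) (n - i - 1))
        (lowUpLaw T ℓ (i + 1) (n - i - 1) i) ∧
      -- (c) the induced Beck composite monad structure on `T_n ∘ ⋯ ∘ T₀` is the fully
      -- iterated one, hence independent of `i`
      ∃ hF : lowFun T i ⋙ upFun T (i + 1) (n - i - 1) = lowFun T n,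
        (∀ X : C,
          (upUnit T (i + 1) (n - i - 1) X
              ≫ (upFun T (i + 1) (n - i - 1)).map (lowUnit T i X))
            ≫ eqToHom (Functor.congr_obj hF X) = lowUnit T n X) ∧
        (∀ X : C,
          eqToHom (((Functor.congr_obj hF
                ((lowFun T i ⋙ upFun T (i + 1) (n - i - 1)).obj X)).trans
              (congrArg (lowFun T n).obj (Functor.congr_obj hF X))).symm)
            ≫ ((upFun T (i + 1) (n - i - 1)).map
                  (lowUpLaw T ℓ (i + 1) (n - i - 1) i ((lowFun T i).obj X))
                ≫ upMul T ℓ (i + 1) (n - i - 1) ((lowFun T i).obj ((lowFun T i).obj X))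
                ≫ (upFun T (i + 1) (n - i - 1)).map (lowMul T ℓ i X))
            ≫ eqToHom (Functor.congr_obj hF X) = lowMul T ℓ n X) := by
  intro i _ hin
  obtain ⟨m, rfl⟩ : ∃ m, n = i + 1 + m := ⟨n - i - 1, by omega⟩
  rw [show i + 1 + m - i - 1 = m by omega]
  exact ⟨isMonadStructure_lowFun hlaw hYB i (by omega),
    isMonadStructure_upFun hlaw hYB m le_rfl,
    isDistribLawData_lowUpLaw hlaw hYB i m (by omega) le_rfl,
    lowFun_comp_upFun T i m, congrFun (transportUnit_lowUnit T i m),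
    congrFun (transportMul_lowMul hlaw hYB i m le_rfl)⟩

/-- **Cheng's theorem on distributive series of monads.**  Let `T₀, …, T_n` (`n ≥ 2`) be
monads equipped with distributive laws `λ^{i,j}` of `Tᵢ` over `Tⱼ` for `i < j ≤ n`
satisfying the Yang–Baxter equations.  Then for every `1 ≤ i < n`:
(a) the iterated Beck composites give monad structures on `Tᵢ ∘ ⋯ ∘ T₀` and on
`T_n ∘ ⋯ ∘ T_{i+1}`;
(b) the composite of the components of the `λ^{j,k}` (for `j ≤ i < k`) is a distributive
law of the monad `Tᵢ ∘ ⋯ ∘ T₀` over the monad `T_n ∘ ⋯ ∘ T_{i+1}`;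
(c) the monad structure induced on `T_n ∘ ⋯ ∘ T₀` by the corresponding Beck composite is
independent of `i`: it always agrees (along the canonical identification of the underlying
endofunctors) with the fully iterated structure `(lowFun T n, lowUnit T n, lowMul T ℓ n)`. -/
theorem cheng_distributive_series (n : ℕ) (hn : 2 ≤ n) (T : ℕ → Monad C)
    (ℓ : ∀ i j : ℕ, ∀ X : C, (T i).obj ((T j).obj X) ⟶ (T j).obj ((T i).obj X))
    (hlaw : ∀ i j : ℕ, i < j → j ≤ n → IsMonadDistribLaw (T i) (T j) (ℓ i j))
    (hYB : ∀ i j k : ℕ, i < j → j < k → k ≤ n →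
      YangBaxter (T i) (T j) (T k) (ℓ i j) (ℓ i k) (ℓ j k)) :
    ∀ i : ℕ, 1 ≤ i → i < n →
      -- (a) both iterated Beck composites are monads
      IsMonadStructure (lowFun T i) (lowUnit T i) (lowMul T ℓ i) ∧
      IsMonadStructure (upFun T (i + 1) (n - i - 1)) (upUnit T (i + 1) (n - i - 1))
        (upMul T ℓ (i + 1) (n - i - 1)) ∧
      -- (b) the composite of the `λ^{j,k}` is a distributive law of
      -- `Tᵢ ∘ ⋯ ∘ T₀` over `T_n ∘ ⋯ ∘ T_{i+1}`
      IsDistribLawData (lowFun T i) (upFun T (i + 1) (n - i - 1))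
        (lowUnit T i) (lowMul T ℓ i)
        (upUnit T (i + 1) (n - i - 1)) (upMul T ℓ (i + 1) (n - i - 1))
        (lowUpLaw T ℓ (i + 1) (n - i - 1) i) ∧
      -- (c) the induced Beck composite monad structure on `T_n ∘ ⋯ ∘ T₀` is the fully
      -- iterated one, hence independent of `i`
      ∃ hF : lowFun T i ⋙ upFun T (i + 1) (n - i - 1) = lowFun T n,
        (∀ X : C,
          (upUnit T (i + 1) (n - i - 1) X
              ≫ (upFun T (i + 1) (n - i - 1)).map (lowUnit T i X))
            ≫ eqToHom (Functor.congr_obj hF X) = lowUnit T n X) ∧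
        (∀ X : C,
          eqToHom (((Functor.congr_obj hF
                ((lowFun T i ⋙ upFun T (i + 1) (n - i - 1)).obj X)).trans
              (congrArg (lowFun T n).obj (Functor.congr_obj hF X))).symm)
            ≫ ((upFun T (i + 1) (n - i - 1)).map
                  (lowUpLaw T ℓ (i + 1) (n - i - 1) i ((lowFun T i).obj X))
                ≫ upMul T ℓ (i + 1) (n - i - 1) ((lowFun T i).obj ((lowFun T i).obj X))
                ≫ (upFun T (i + 1) (n - i - 1)).map (lowMul T ℓ i X))
            ≫ eqToHom (Functor.congr_obj hF X) = lowMul T ℓ n X) :=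
  cheng_distributive_series_general n T ℓ hlaw hYB
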